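/- arXiv:1009.4471 — 3 statements merged into one kernel-verified Lean document; each statement's English description precedes it below -/
import Mathlib

section
/- Let H be a graph with chromatic number χ ≥ 2, and let G be the graph obtained by subdividing every edge of H exactly once. Then box(G) ≤ ⌈log₂ log₂ χ⌉ + 3. -/
/-- A `k`-box representation of a simple graph: each vertex gets an axis-parallel box
`∏ i, [l v i, r v i]` in `ℝ^k`, and distinct vertices are adjacent iff their boxes meet. -/
def SimpleGraph.HasBoxRep {V : Type*} (G : SimpleGraph V) (k : ℕ) : Prop :=
  ∃ l r : V → Fin k → ℝ, (∀ v i, l v i ≤ r v i) ∧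
    ∀ u v : V, u ≠ v →
      (G.Adj u v ↔ ∀ i, max (l u i) (l v i) ≤ min (r u i) (r v i))

/-- Boxicity: the minimum `k` such that `G` has a `k`-box representation. -/
noncomputable def SimpleGraph.boxicity {V : Type*} (G : SimpleGraph V) : ℕ :=
  sInf {k | G.HasBoxRep k}

/-- The full subdivision of `H`: every edge of `H` is subdivided exactly once; the new
vertex corresponding to an edge `e` is adjacent exactly to the two endpoints of `e`. -/
def fullSubdivision {V : Type*} (H : SimpleGraph V) : SimpleGraph (V ⊕ H.edgeSet) :=
  SimpleGraph.fromRel (fun a b =>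
    match a, b with
    | Sum.inl v, Sum.inr e => v ∈ (e : Sym2 V)
    | _, _ => False)

/-!
Place each vertex of `H` at a point of `ℝ^k` and the subdivision vertex of an edge `uw` at the
bounding box of `u` and `w`. One more coordinate, in which subdivision vertices are distinct points
and original vertices span all of them, turns this into a `(k + 1)`-box representation as soon as
no edge's bounding box contains a third vertex.

For `k = t + 2`, take a proper colouring with colours `< 2 ^ 2 ^ t` and order the vertices in
coordinate `j` by their colour xor a mask `m j`, breaking ties by a fixed enumeration. Whether
`a ^^^ m < b ^^^ m` is decided by the top bit `s` in which `a` and `b` differ, so a colour `a` lies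
outside the span of `b` and `d` once `m` agrees with `a` at both or at neither of the top bits
`s` of `(a, b)` and `r` of `(a, d)`. Since `s, r < 2 ^ t`, the masks `0`, all ones and
`p ↦ p.testBit i` for `i < t` realise every such pattern.
-/

open Finset Function
open scoped Interval

namespace Nat

theorem testBit_sum_two_pow (s : Finset ℕ) (i : ℕ) :
    (∑ p ∈ s, 2 ^ p).testBit i = decide (i ∈ s) := by
  rw [Bool.eq_iff_iff, ← mem_bitIndices, ← List.mem_toFinset, toFinset_bitIndices_sum_two_pow,
    decide_eq_true_iff]

theorem exists_testBit_ne_forall_gt_eq {a b n : ℕ} (ha : a < 2 ^ n) (hb : b < 2 ^ n)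
    (hab : a ≠ b) :
    ∃ i < n, a.testBit i ≠ b.testBit i ∧ ∀ j, i < j → a.testBit j = b.testBit j := by
  obtain ⟨i, hi, habove⟩ := exists_most_significant_bit (xor_ne_zero_iff.2 hab)
  have hin : i < n := by
    by_contra! hni
    rw [testBit_lt_two_pow ((xor_lt_two_pow ha hb).trans_le (Nat.pow_le_pow_right two_pos hni))]
      at hi
    exact Bool.false_ne_true hi
  simp only [testBit_xor, bne_iff_ne, bne_eq_false_iff_eq] at hi habove
  exact ⟨i, hin, hi, habove⟩

theorem xor_lt_xor_iff {a b m i : ℕ} (hi : a.testBit i ≠ b.testBit i)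
    (habove : ∀ j, i < j → a.testBit j = b.testBit j) :
    a ^^^ m < b ^^^ m ↔ a.testBit i = m.testBit i := by
  have lt_of_eq : ∀ {a b : ℕ}, a.testBit i ≠ b.testBit i →
      (∀ j, i < j → a.testBit j = b.testBit j) → a.testBit i = m.testBit i → a ^^^ m < b ^^^ m :=
    fun hi habove h => lt_of_testBit i (by simp [h]) (by simp [← h, Ne.symm hi])
      (fun j hj => by simp [habove j hj])
  refine ⟨fun hlt => ?_, lt_of_eq hi habove⟩
  by_contra hne
  refine hlt.not_gt (lt_of_eq hi.symm (fun j hj => (habove j hj).symm) ?_)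
  revert hi hne
  cases a.testBit i <;> cases b.testBit i <;> cases m.testBit i <;> decide

theorem mul_add_lt_mul_add {a b i j N : ℕ} (hi : i < N) (hab : a < b) :
    a * N + i < b * N + j := by
  nlinarith

end Nat

theorem Set.notMem_uIcc_of_lt_iff_lt {α : Type*} [LinearOrder α] {x y z : α} (hy : x ≠ y)
    (hz : x ≠ z) (h : x < y ↔ x < z) : x ∉ [[y, z]] := by
  rcases hy.lt_or_gt with hxy | hxy
  · exact Set.notMem_uIcc_of_lt hxy (h.1 hxy)
  · exact Set.notMem_uIcc_of_gt hxy ((hz.lt_or_gt.resolve_left fun hxz => hxy.not_gt (h.2 hxz)))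

theorem Set.notMem_uIcc_iff {α : Type*} [LinearOrder α] {x y z : α} :
    x ∉ [[y, z]] ↔ x < y ∧ x < z ∨ y < x ∧ z < x := by
  rw [← Set.Icc_min_max, Set.mem_Icc, not_and_or, not_le, not_le, lt_min_iff, max_lt_iff]

def IsSeparatingFamily {ι α : Type*} (K : ι → α → ℕ) : Prop :=
  (∀ ⦃b d⦄, b ≠ d → ∃ j, K j b < K j d) ∧
    ∀ ⦃a b d⦄, a ≠ b → a ≠ d → ∃ j, K j a ∉ [[K j b, K j d]]

def xorMask (t : ℕ) (j : Fin (t + 2)) : ℕ :=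
  ∑ p ∈ Matrix.vecCons ∅ (Matrix.vecCons (range (2 ^ t))
    fun i : Fin t => {p ∈ range (2 ^ t) | p.testBit i}) j, 2 ^ p

theorem exists_testBit_xorMask_eq {t p : ℕ} (hp : p < 2 ^ t) (β : Bool) :
    ∃ j, (xorMask t j).testBit p = β := by
  cases β
  · exact ⟨0, by simp [xorMask]⟩
  · exact ⟨1, by simp [xorMask, Nat.testBit_sum_two_pow, hp]⟩

theorem exists_testBit_xorMask_iff {t p q : ℕ} (hp : p < 2 ^ t) (hq : q < 2 ^ t) (hpq : p ≠ q)
    (β γ : Bool) : ∃ j, ((xorMask t j).testBit p = β ↔ (xorMask t j).testBit q = γ) := by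
  by_cases hβγ : β = γ
  · exact ⟨0, by simp [xorMask, hβγ]⟩
  obtain ⟨i, hi, hne, -⟩ := Nat.exists_testBit_ne_forall_gt_eq hp hq hpq
  refine ⟨(⟨i, hi⟩ : Fin t).succ.succ, ?_⟩
  simp only [xorMask, Nat.testBit_sum_two_pow, Matrix.cons_val_succ, mem_filter, mem_range, hp,
    hq, true_and]
  revert hne hβγ
  cases p.testBit i <;> cases q.testBit i <;> cases β <;> cases γ <;> decide

theorem isSeparatingFamily_xorMask (t : ℕ) :
    IsSeparatingFamily fun j (a : Fin (2 ^ 2 ^ t)) => (a : ℕ) ^^^ xorMask t j := by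
  constructor
  · intro b d hbd
    obtain ⟨P, hP, hne, habove⟩ :=
      Nat.exists_testBit_ne_forall_gt_eq b.isLt d.isLt (Fin.val_ne_of_ne hbd)
    obtain ⟨j, hj⟩ := exists_testBit_xorMask_eq hP ((b : ℕ).testBit P)
    exact ⟨j, (Nat.xor_lt_xor_iff hne habove).2 hj.symm⟩
  · intro a b d hab had
    obtain ⟨s, hs, habs, habove⟩ :=
      Nat.exists_testBit_ne_forall_gt_eq a.isLt b.isLt (Fin.val_ne_of_ne hab)
    obtain ⟨r, hr, hadr, hadove⟩ :=
      Nat.exists_testBit_ne_forall_gt_eq a.isLt d.isLt (Fin.val_ne_of_ne had)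
    obtain ⟨j, hj⟩ : ∃ j, ((a : ℕ).testBit s = (xorMask t j).testBit s ↔
        (a : ℕ).testBit r = (xorMask t j).testBit r) := by
      by_cases hsr : s = r
      · exact ⟨0, by rw [hsr]⟩
      · simpa only [eq_comm] using exists_testBit_xorMask_iff hs hr hsr _ _
    refine ⟨j, Set.notMem_uIcc_of_lt_iff_lt ?_ ?_ ?_⟩
    · exact fun h => hab (Fin.val_injective (Nat.xor_left_inj.1 h))
    · exact fun h => had (Fin.val_injective (Nat.xor_left_inj.1 h))
    · rw [Nat.xor_lt_xor_iff habs habove, Nat.xor_lt_xor_iff hadr hadove]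
      exact hj

section LexPlacement

variable {V ι α : Type*} [Finite V]

noncomputable def lexPlacement (K : ι → α → ℕ) (c : V → α) (v : V) (j : ι) : ℝ :=
  (K j (c v) * Nat.card V + Finite.equivFin V v : ℕ)

variable {K : ι → α → ℕ} {c : V → α}

theorem lexPlacement_lt_of_key_lt {v w : V} {j : ι} (h : K j (c v) < K j (c w)) :
    lexPlacement K c v j < lexPlacement K c w j :=
  Nat.cast_lt.2 (Nat.mul_add_lt_mul_add (Finite.equivFin V v).isLt h)

theorem lexPlacement_lt_of_key_eq {v w : V} {j : ι} (h : K j (c v) = K j (c w))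
    (hvw : Finite.equivFin V v < Finite.equivFin V w) :
    lexPlacement K c v j < lexPlacement K c w j := by
  unfold lexPlacement
  rw [h]
  exact_mod_cast Nat.add_lt_add_left hvw _

theorem lexPlacement_injective [Nonempty ι] : Injective (lexPlacement K c) := by
  intro v w h
  obtain ⟨j⟩ := ‹Nonempty ι›
  have hj := congrArg (fun n => n % Nat.card V) (Nat.cast_injective (congrFun h j))
  simp only [Nat.mul_add_mod_of_lt (Fin.isLt _)] at hj
  exact (Finite.equivFin V).injective (Fin.ext hj)

theorem exists_lexPlacement_notMem_uIcc_of_key_eq (hK : IsSeparatingFamily K) {u v w : V}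
    (hvu : v ≠ u) (hc : c v = c u) (huw : c u ≠ c w) :
    ∃ j, lexPlacement K c v j ∉ [[lexPlacement K c u j, lexPlacement K c w j]] := by
  have hidx : Finite.equivFin V v ≠ Finite.equivFin V u := (Finite.equivFin V).injective.ne hvu
  rcases hidx.lt_or_gt with hlt | hgt
  · obtain ⟨j, hj⟩ := hK.1 huw
    exact ⟨j, Set.notMem_uIcc_of_lt (lexPlacement_lt_of_key_eq (congrArg (K j) hc) hlt)
      (lexPlacement_lt_of_key_lt (hc ▸ hj))⟩
  · obtain ⟨j, hj⟩ := hK.1 huw.symm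
    exact ⟨j, Set.notMem_uIcc_of_gt (lexPlacement_lt_of_key_eq (congrArg (K j) hc.symm) hgt)
      (lexPlacement_lt_of_key_lt (hc ▸ hj))⟩

theorem exists_lexPlacement_notMem_uIcc {H : SimpleGraph V} (hK : IsSeparatingFamily K)
    (C : H.Coloring α) {u v w : V} (huw : H.Adj u w) (hvu : v ≠ u) (hvw : v ≠ w) :
    ∃ j, lexPlacement K C v j ∉ [[lexPlacement K C u j, lexPlacement K C w j]] := by
  by_cases hcu : C v = C u
  · exact exists_lexPlacement_notMem_uIcc_of_key_eq hK hvu hcu (C.valid huw)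
  by_cases hcw : C v = C w
  · simpa only [Set.uIcc_comm] using
      exists_lexPlacement_notMem_uIcc_of_key_eq hK hvw hcw (C.valid huw.symm)
  obtain ⟨j, hj⟩ := hK.2 hcu hcw
  refine ⟨j, ?_⟩
  rcases Set.notMem_uIcc_iff.1 hj with ⟨hu, hw⟩ | ⟨hu, hw⟩
  · exact Set.notMem_uIcc_of_lt (lexPlacement_lt_of_key_lt hu) (lexPlacement_lt_of_key_lt hw)
  · exact Set.notMem_uIcc_of_gt (lexPlacement_lt_of_key_lt hu) (lexPlacement_lt_of_key_lt hw)

end LexPlacement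

section FullSubdivision

variable {V : Type*} {H : SimpleGraph V}

@[simp]
theorem fullSubdivision_adj_inl_inr {v : V} {e : H.edgeSet} :
    (fullSubdivision H).Adj (.inl v) (.inr e) ↔ v ∈ (e : Sym2 V) := by
  simp [fullSubdivision]

@[simp]
theorem not_fullSubdivision_adj_inl_inl {v w : V} :
    ¬(fullSubdivision H).Adj (.inl v) (.inl w) := by
  simp [fullSubdivision]

@[simp]
theorem not_fullSubdivision_adj_inr_inr {e f : H.edgeSet} :
    ¬(fullSubdivision H).Adj (.inr e) (.inr f) := by
  simp [fullSubdivision]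

theorem mem_edge_iff_forall_mem_Icc {k : ℕ} (p : V → Fin k → ℝ)
    (hsep : ∀ ⦃u w⦄, H.Adj u w → ∀ v, v ≠ u → v ≠ w → ∃ i, p v i ∉ [[p u i, p w i]])
    {e : Sym2 V} (he : e ∈ H.edgeSet) (v : V) :
    v ∈ e ↔ ∀ i, p v i ∈ Set.Icc (e.map (p · i)).inf (e.map (p · i)).sup := by
  induction e using Sym2.ind with | _ u w
  simp only [Sym2.mem_iff, Sym2.map_mk, Sym2.inf_mk, Sym2.sup_mk]
  refine ⟨?_, fun h => ?_⟩
  · rintro (rfl | rfl) i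
    exacts [Set.left_mem_uIcc, Set.right_mem_uIcc]
  · by_contra! hv
    obtain ⟨i, hi⟩ := hsep he v hv.1 hv.2
    exact hi (h i)

theorem hasBoxRep_fullSubdivision [Finite V] {k : ℕ} (p : V → Fin k → ℝ) (hp : Injective p)
    (hsep : ∀ ⦃u w⦄, H.Adj u w → ∀ v, v ≠ u → v ≠ w → ∃ i, p v i ∉ [[p u i, p w i]]) :
    (fullSubdivision H).HasBoxRep (k + 1) := by
  obtain ⟨g, hg, M, hM, hgM⟩ : ∃ g : H.edgeSet → ℝ, Injective g ∧
      ∃ M : ℝ, 0 ≤ M ∧ ∀ e, 0 ≤ g e ∧ g e ≤ M :=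
    ⟨fun e => (Finite.equivFin H.edgeSet e : ℕ), Nat.cast_injective.comp
      (Fin.val_injective.comp (Finite.equivFin _).injective), Nat.card H.edgeSet,
      Nat.cast_nonneg _, fun e => ⟨Nat.cast_nonneg _, Nat.cast_le.2 (Fin.isLt _).le⟩⟩
  let l : V ⊕ H.edgeSet → Fin (k + 1) → ℝ := Sum.elim (fun v => Fin.cons 0 (p v))
    fun e => Fin.cons (g e) fun i => (e.1.map (p · i)).inf
  let r : V ⊕ H.edgeSet → Fin (k + 1) → ℝ := Sum.elim (fun v => Fin.cons M (p v))
    fun e => Fin.cons (g e) fun i => (e.1.map (p · i)).sup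
  refine ⟨l, r, ?_, ?_⟩
  · rintro (v | e) i <;> induction i using Fin.cases <;>
      simp [l, r, hM, Sym2.inf_le_sup]
  have hvert : ∀ v e, (fullSubdivision H).Adj (.inl v) (.inr e) ↔
      ∀ i, max (l (.inl v) i) (l (.inr e) i) ≤ min (r (.inl v) i) (r (.inr e) i) := by
    intro v e
    simp [Fin.forall_fin_succ, l, r, hM, hgM e, Sym2.inf_le_sup,
      mem_edge_iff_forall_mem_Icc p hsep e.2 v]
  rintro (v | e) (w | f) hne
  · refine iff_of_false not_fullSubdivision_adj_inl_inl fun h => hne ?_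
    refine congrArg _ (hp (funext fun i => ?_))
    simpa [l, r, le_antisymm_iff, and_comm] using h i.succ
  · exact hvert v f
  · rw [SimpleGraph.adj_comm, hvert]
    exact forall_congr' fun i => by rw [max_comm, min_comm]
  · refine iff_of_false not_fullSubdivision_adj_inr_inr fun h => hne ?_
    refine congrArg _ (hg ?_)
    simpa [l, r, le_antisymm_iff, and_comm] using h 0

end FullSubdivision

theorem boxicity_fullSubdivision_chromatic_general {V : Type*} [Fintype V]
    (H : SimpleGraph V) (χ : ℕ) (hχ : H.chromaticNumber = (χ : ℕ∞)) :
    (fullSubdivision H).boxicity ≤ Nat.clog 2 (Nat.clog 2 χ) + 3 := by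
  set t := Nat.clog 2 (Nat.clog 2 χ)
  have hχt : χ ≤ 2 ^ 2 ^ t := (Nat.le_pow_clog one_lt_two χ).trans
    (Nat.pow_le_pow_right two_pos (Nat.le_pow_clog one_lt_two _))
  obtain ⟨C⟩ := (SimpleGraph.chromaticNumber_le_iff_colorable.1 hχ.le).mono hχt
  exact Nat.sInf_le (hasBoxRep_fullSubdivision (lexPlacement _ C) lexPlacement_injective
    fun _ _ huw _ => exists_lexPlacement_notMem_uIcc (isSeparatingFamily_xorMask t) C huw)

/-- If `H` has chromatic number `χ ≥ 2` and `G` is the full subdivision of `H`,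
then `box(G) ≤ ⌈log₂ log₂ χ⌉ + 3`. -/
theorem boxicity_fullSubdivision_chromatic {V : Type*} [Fintype V]
    (H : SimpleGraph V) (χ : ℕ) (hχ : H.chromaticNumber = (χ : ℕ∞)) (h2 : 2 ≤ χ) :
    (fullSubdivision H).boxicity ≤ Nat.clog 2 (Nat.clog 2 χ) + 3 :=
  boxicity_fullSubdivision_chromatic_general H χ hχ
end

section
/- Let G be the line graph of a multigraph H, with maximum degree Δ ≥ 2. Then box(G) ≤ 2Δ(⌈log₂ log₂ Δ⌉ + 3) + 1. -/
/-- The line graph of a multigraph given by an endpoint map `ends : E → Sym2 V`: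
vertices are the edges, two distinct edges adjacent iff they share an endpoint. -/
def lineGraph {V E : Type*} (ends : E → Sym2 V) : SimpleGraph E :=
  SimpleGraph.fromRel (fun e₁ e₂ => ∃ v, v ∈ ends e₁ ∧ v ∈ ends e₂)

open Finset

namespace SimpleGraph

variable {W : Type*} {G : SimpleGraph W}

theorem HasBoxRep.mono {k n : ℕ} (h : G.HasBoxRep k) (hkn : k ≤ n) : G.HasBoxRep n := by
  obtain ⟨l, r, hlr, hadj⟩ := h
  refine ⟨fun v i => if hi : (i : ℕ) < k then l v ⟨i, hi⟩ else 0,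
    fun v i => if hi : (i : ℕ) < k then r v ⟨i, hi⟩ else 0, fun v i => ?_, fun u v huv => ?_⟩
  · dsimp only
    split_ifs
    exacts [hlr _ _, le_rfl]
  · rw [hadj u v huv]
    constructor
    · intro h i
      dsimp only
      split_ifs
      exacts [h _, by simp]
    · intro h i
      simpa [i.isLt] using h ⟨i, i.isLt.trans_le hkn⟩

theorem hasBoxRep_card {D : Type*} [Fintype D] (l r : W → D → ℝ) (hlr : ∀ v d, l v d ≤ r v d)
    (hadj : ∀ u v, u ≠ v → (G.Adj u v ↔ ∀ d, max (l u d) (l v d) ≤ min (r u d) (r v d))) :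
    G.HasBoxRep (Fintype.card D) := by
  let e := Fintype.equivFin D
  exact ⟨fun v i => l v (e.symm i), fun v i => r v (e.symm i), fun v i => hlr v _,
    fun u v huv => (hadj u v huv).trans e.symm.forall_congr_right.symm⟩

theorem boxicity_le_of_hasBoxRep {k : ℕ} (h : G.HasBoxRep k) : G.boxicity ≤ k :=
  Nat.sInf_le h

theorem colorable_succ_of_forall_degree_le [Fintype W] [DecidableRel G.Adj] {d : ℕ}
    (h : ∀ v, G.degree v ≤ d) : G.Colorable (d + 1) := by
  classical
  suffices ∀ s : Finset W, ∃ C : W → Fin (d + 1), ∀ u ∈ s, ∀ v ∈ s, G.Adj u v → C u ≠ C v by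
    obtain ⟨C, hC⟩ := this univ
    exact ⟨Coloring.mk C fun huv => hC _ (mem_univ _) _ (mem_univ _) huv⟩
  intro s
  induction s using Finset.induction_on with
  | empty => exact ⟨fun _ => 0, by simp⟩
  | insert a s ha ih =>
    obtain ⟨C, hC⟩ := ih
    obtain ⟨x, -, hx⟩ : ∃ x ∈ (univ : Finset (Fin (d + 1))), x ∉ (G.neighborFinset a).image C := by
      refine exists_mem_notMem_of_card_lt_card ?_
      calc _ ≤ (G.neighborFinset a).card := card_image_le
        _ = G.degree a := G.card_neighborFinset_eq_degree a
        _ < _ := by simpa using Nat.lt_succ_of_le (h a)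
    have hnew : ∀ v, G.Adj a v → x ≠ C v := fun v hv hxv =>
      hx (mem_image.mpr ⟨v, (G.mem_neighborFinset a v).mpr hv, hxv.symm⟩)
    refine ⟨Function.update C a x, fun u hu v hv huv => ?_⟩
    rcases mem_insert.mp hu with rfl | hus <;> rcases mem_insert.mp hv with rfl | hvs
    · exact absurd huv G.irrefl
    · rw [Function.update_self, Function.update_of_ne (ne_of_mem_of_not_mem hvs ha)]
      exact hnew v huv
    · rw [Function.update_self, Function.update_of_ne (ne_of_mem_of_not_mem hus ha)]
      exact (hnew u huv.symm).symm
    · rw [Function.update_of_ne (ne_of_mem_of_not_mem hus ha),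
        Function.update_of_ne (ne_of_mem_of_not_mem hvs ha)]
      exact hC u hus v hvs huv

end SimpleGraph

namespace Sym2

variable {α : Type*}

theorem eq_or_eq_or_eq_of_mem {s : Sym2 α} {a b c : α} (ha : a ∈ s) (hb : b ∈ s) (hc : c ∈ s) :
    a = b ∨ a = c ∨ b = c := by
  induction s using Sym2.ind with
  | _ x y =>
    rw [mem_iff] at ha hb hc
    rcases ha with rfl | rfl <;> rcases hb with rfl | rfl <;> rcases hc with rfl | rfl <;> simp

variable [LinearOrder α]

theorem inf_mem (s : Sym2 α) : s.inf ∈ s := by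
  induction s using Sym2.ind with
  | _ x y => rcases min_choice x y with h | h <;> simp [h]

theorem sup_mem (s : Sym2 α) : s.sup ∈ s := by
  induction s using Sym2.ind with
  | _ x y => rcases max_choice x y with h | h <;> simp [h]

theorem inf_le_of_mem {s : Sym2 α} {a : α} (h : a ∈ s) : s.inf ≤ a := by
  induction s using Sym2.ind with
  | _ x y => rcases mem_iff.mp h with rfl | rfl <;> simp

theorem le_sup_of_mem {s : Sym2 α} {a : α} (h : a ∈ s) : a ≤ s.sup := by
  induction s using Sym2.ind with
  | _ x y => rcases mem_iff.mp h with rfl | rfl <;> simp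

end Sym2

section LineGraph

variable {V E : Type*} {ends : E → Sym2 V}

theorem lineGraph_adj {e f : E} :
    (lineGraph ends).Adj e f ↔ e ≠ f ∧ ∃ v, v ∈ ends e ∧ v ∈ ends f := by
  rw [lineGraph, SimpleGraph.fromRel_adj]
  exact and_congr_right fun _ => or_iff_left_of_imp fun ⟨v, hf, he⟩ => ⟨v, he, hf⟩

/-- In coordinate `d`, an edge gets the interval spanned by the labels `g d` of its endpoints, so
edges sharing an endpoint always have intersecting boxes. -/
theorem lineGraph_hasBoxRep {D : Type*} [Fintype D] (g : D → V → ℝ)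
    (hsep : ∀ e f, e ≠ f → ¬ (lineGraph ends).Adj e f → ∃ d,
      (∀ x ∈ ends e, ∀ y ∈ ends f, g d x < g d y) ∨ (∀ x ∈ ends e, ∀ y ∈ ends f, g d y < g d x)) :
    (lineGraph ends).HasBoxRep (Fintype.card D) := by
  refine SimpleGraph.hasBoxRep_card (fun e d => ((ends e).map (g d)).inf)
    (fun e d => ((ends e).map (g d)).sup) (fun e d => Sym2.inf_le_sup _) fun e f hef => ⟨?_, ?_⟩
  · intro hadj d
    obtain ⟨-, v, he, hf⟩ := lineGraph_adj.mp hadj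
    have hmem : ∀ e', v ∈ ends e' → g d v ∈ (ends e').map (g d) := fun e' h =>
      Sym2.mem_map.mpr ⟨v, h, rfl⟩
    exact (max_le (Sym2.inf_le_of_mem (hmem e he)) (Sym2.inf_le_of_mem (hmem f hf))).trans
      (le_min (Sym2.le_sup_of_mem (hmem e he)) (Sym2.le_sup_of_mem (hmem f hf)))
  · intro hbox
    by_contra hadj
    obtain ⟨d, hd⟩ := hsep e f hef hadj
    have hlt : ∀ e' f', (∀ x ∈ ends e', ∀ y ∈ ends f', g d x < g d y) →
        ((ends e').map (g d)).sup < ((ends f').map (g d)).inf := by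
      intro e' f' h
      obtain ⟨x, hx, hxs⟩ := Sym2.mem_map.mp (Sym2.sup_mem ((ends e').map (g d)))
      obtain ⟨y, hy, hyi⟩ := Sym2.mem_map.mp (Sym2.inf_mem ((ends f').map (g d)))
      exact hxs ▸ hyi ▸ h x hx y hy
    have := hbox d
    rcases hd with hd | hd
    · exact (hlt e f hd).not_ge ((le_max_right _ _).trans (this.trans (min_le_left _ _)))
    · exact (hlt f e fun y hy x hx => hd x hx y hy).not_ge
        ((le_max_left _ _).trans (this.trans (min_le_right _ _)))

end LineGraph

section Coloring

variable {V E C : Type*} {ends : E → Sym2 V} (c : (lineGraph ends).Coloring C)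

theorem lineGraph.eq_of_color_eq_of_mem {e₁ e₂ : E} {v : V} (hc : c e₁ = c e₂)
    (h₁ : v ∈ ends e₁) (h₂ : v ∈ ends e₂) : e₁ = e₂ := by
  by_contra hne
  exact c.valid (lineGraph_adj.mpr ⟨hne, v, h₁, h₂⟩) hc

theorem lineGraph.eq_or_eq_or_eq_of_adj_of_color_eq {f e₁ e₂ e₃ : E}
    (h₁ : (lineGraph ends).Adj f e₁) (h₂ : (lineGraph ends).Adj f e₂)
    (h₃ : (lineGraph ends).Adj f e₃) (hc₂ : c e₁ = c e₂) (hc₃ : c e₁ = c e₃) :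
    e₁ = e₂ ∨ e₁ = e₃ ∨ e₂ = e₃ := by
  obtain ⟨-, v₁, hf₁, he₁⟩ := lineGraph_adj.mp h₁
  obtain ⟨-, v₂, hf₂, he₂⟩ := lineGraph_adj.mp h₂
  obtain ⟨-, v₃, hf₃, he₃⟩ := lineGraph_adj.mp h₃
  rcases Sym2.eq_or_eq_or_eq_of_mem hf₁ hf₂ hf₃ with rfl | rfl | rfl
  · exact Or.inl (lineGraph.eq_of_color_eq_of_mem c hc₂ he₁ he₂)
  · exact Or.inr (Or.inl (lineGraph.eq_of_color_eq_of_mem c hc₃ he₁ he₃))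
  · exact Or.inr (Or.inr (lineGraph.eq_of_color_eq_of_mem c (hc₂.symm.trans hc₃) he₂ he₃))

end Coloring

def SimpleGraph.sameColorDistTwo {W C : Type*} (G : SimpleGraph W) (c : W → C) :
    SimpleGraph W where
  Adj u v := u ≠ v ∧ c u = c v ∧ ∃ w, G.Adj w u ∧ G.Adj w v
  symm := ⟨fun _ _ ⟨hne, hc, w, hu, hv⟩ => ⟨hne.symm, hc.symm, w, hv, hu⟩⟩
  loopless := ⟨fun _ h => h.1 rfl⟩

theorem lineGraph.degree_sameColorDistTwo_le {V E C : Type*} [Fintype E] {ends : E → Sym2 V}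
    [DecidableRel (lineGraph ends).Adj] (c : (lineGraph ends).Coloring C)
    [DecidableRel ((lineGraph ends).sameColorDistTwo c).Adj] (e : E) :
    ((lineGraph ends).sameColorDistTwo c).degree e ≤ (lineGraph ends).degree e := by
  rw [← SimpleGraph.card_neighborFinset_eq_degree, ← SimpleGraph.card_neighborFinset_eq_degree]
  have hw : ∀ e', ((lineGraph ends).sameColorDistTwo c).Adj e e' →
      ∃ w, (lineGraph ends).Adj w e ∧ (lineGraph ends).Adj w e' := fun _ h => h.2.2
  choose! w hw using hw
  refine card_le_card_of_injOn w (fun e' he' => ?_) fun e₁ he₁ e₂ he₂ hw₁₂ => ?_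
  · simp only [SimpleGraph.coe_neighborFinset, SimpleGraph.mem_neighborSet] at he' ⊢
    exact (hw e' he').1.symm
  · simp only [SimpleGraph.coe_neighborFinset, SimpleGraph.mem_neighborSet] at he₁ he₂
    obtain ⟨hadj, hadj₁⟩ := hw e₁ he₁
    rw [hw₁₂] at hadj hadj₁
    rcases lineGraph.eq_or_eq_or_eq_of_adj_of_color_eq c hadj hadj₁ (hw e₂ he₂).2 he₁.2.1
      he₂.2.1 with h | h | h
    exacts [absurd h he₁.1, absurd h he₂.1, h]

namespace Nat

/-- `(a ^^^ b).log2` is the most significant bit in which `a` and `b` differ. -/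
theorem lt_iff_testBit_log2_xor_eq_false {a b : ℕ} (h : a ≠ b) :
    a < b ↔ a.testBit (a ^^^ b).log2 = false := by
  have hd : a ^^^ b ≠ 0 := fun h0 => h (Nat.eq_of_xor_eq_zero h0)
  set i := (a ^^^ b).log2
  have hi : (a.testBit i ^^ b.testBit i) = true := by
    rw [← testBit_xor]; exact testBit_log2 hd
  have habove : ∀ j, i < j → a.testBit j = b.testBit j := fun j hj => by
    have : (a ^^^ b).testBit j = false :=
      testBit_lt_two_pow (lt_log2_self.trans_le (Nat.pow_le_pow_right two_pos hj))
    rwa [testBit_xor, bne_eq_false_iff_eq] at this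
  cases ha : a.testBit i
  · rw [ha, Bool.false_xor] at hi
    exact iff_of_true (lt_of_testBit i ha hi habove) rfl
  · rw [ha, Bool.true_xor, Bool.not_eq_true'] at hi
    exact iff_of_false (lt_of_testBit i hi ha fun j hj => (habove j hj).symm).not_gt nofun

theorem xor_lt_xor_iff_testBit {a b : ℕ} (h : a ≠ b) (F : ℕ) :
    a ^^^ F < b ^^^ F ↔ (a ^^^ F).testBit (a ^^^ b).log2 = false := by
  have hF : a ^^^ F ≠ b ^^^ F := fun hab => h (Nat.xor_left_injective hab)
  rw [lt_iff_testBit_log2_xor_eq_false hF, Nat.xor_comm b F, ← Nat.xor_assoc,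
    Nat.xor_xor_cancel_right]

def bitMask (m r : ℕ) : ℕ := ofBits fun p : Fin m => (p : ℕ).testBit r

theorem bitMask_lt (m r : ℕ) : bitMask m r < 2 ^ m := ofBits_lt_two_pow _

theorem testBit_bitMask {m r p : ℕ} (hp : p < m) : (bitMask m r).testBit p = p.testBit r :=
  testBit_ofBits_lt _ p hp

theorem exists_testBit_xor_bitMask_eq (x : ℕ) {m i j : ℕ} (hi : i < m) (hj : j < m) :
    ∃ r < clog 2 m + 1,
      (x ^^^ bitMask m r).testBit i = (x ^^^ bitMask m r).testBit j := by
  have hpow : ∀ p < m, p < 2 ^ clog 2 m := fun p hp => hp.trans_le (le_pow_clog one_lt_two m)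
  by_cases hx : x.testBit i = x.testBit j
  · refine ⟨clog 2 m, lt_add_one _, ?_⟩
    simp [testBit_xor, testBit_bitMask hi, testBit_bitMask hj, testBit_lt_two_pow (hpow i hi),
      testBit_lt_two_pow (hpow j hj), hx]
  · obtain ⟨r, hr, hij⟩ : ∃ r < clog 2 m, i.testBit r ≠ j.testBit r := by
      by_contra! h
      refine hx (congrArg _ (eq_of_testBit_eq fun r => ?_))
      rcases Nat.lt_or_ge r (clog 2 m) with hr | hr
      · exact h r hr
      · rw [testBit_lt_two_pow ((hpow i hi).trans_le (Nat.pow_le_pow_right two_pos hr)),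
          testBit_lt_two_pow ((hpow j hj).trans_le (Nat.pow_le_pow_right two_pos hr))]
    refine ⟨r, hr.trans (lt_add_one _), ?_⟩
    rw [testBit_xor, testBit_xor, testBit_bitMask hi, testBit_bitMask hj]
    revert hx hij
    cases x.testBit i <;> cases x.testBit j <;> cases i.testBit r <;> cases j.testBit r <;> simp

/-- Two distinct positions below `m` differ in one of their lowest `clog 2 m` bits, so some mask
makes the bits of `x ^^^ bitMask m r` at the positions deciding the comparisons with `y` and `z`
agree. -/
theorem exists_xor_bitMask_extreme {m x y z : ℕ} (hx : x < 2 ^ m) (hy : y < 2 ^ m)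
    (hz : z < 2 ^ m) (hxy : x ≠ y) (hxz : x ≠ z) :
    ∃ r < clog 2 m + 1,
      (x ^^^ bitMask m r < y ^^^ bitMask m r ∧ x ^^^ bitMask m r < z ^^^ bitMask m r) ∨
      (y ^^^ bitMask m r < x ^^^ bitMask m r ∧ z ^^^ bitMask m r < x ^^^ bitMask m r) := by
  have hlog : ∀ {w}, x ≠ w → w < 2 ^ m → (x ^^^ w).log2 < m := fun hw hwm =>
    (log2_lt fun h0 => hw (Nat.eq_of_xor_eq_zero h0)).mpr (Nat.xor_lt_two_pow hx hwm)
  obtain ⟨r, hr, hbit⟩ := exists_testBit_xor_bitMask_eq x (hlog hxy hy) (hlog hxz hz)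
  refine ⟨r, hr, ?_⟩
  have hy' := xor_lt_xor_iff_testBit hxy (bitMask m r)
  have hz' := xor_lt_xor_iff_testBit hxz (bitMask m r)
  have hyne : x ^^^ bitMask m r ≠ y ^^^ bitMask m r := fun h => hxy (Nat.xor_left_injective h)
  have hzne : x ^^^ bitMask m r ≠ z ^^^ bitMask m r := fun h => hxz (Nat.xor_left_injective h)
  rw [← hbit] at hz'
  cases hb : (x ^^^ bitMask m r).testBit (x ^^^ y).log2
  · exact Or.inl ⟨hy'.mpr hb, hz'.mpr hb⟩
  · rw [hb] at hy' hz'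
    exact Or.inr ⟨lt_of_le_of_ne (not_lt.mp (by simpa using hy')) hyne.symm,
      lt_of_le_of_ne (not_lt.mp (by simpa using hz')) hzne.symm⟩

end Nat

section Positions

variable {E : Type*}

/-- Since `τ` will take values in `(0, 1)`, this orders edges lexicographically by the block
`φ e ^^^ bitMask m r` and then by `τ e`, increasingly if `ζ` and decreasingly otherwise. -/
noncomputable def edgePos (φ : E → ℕ) (τ : E → ℝ) (m r : ℕ) (ζ : Bool) (e : E) : ℝ :=
  2 * (φ e ^^^ Nat.bitMask m r : ℕ) + if ζ then τ e else -τ e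

/-- The label of a vertex not covered by the colour class. It lies beyond all edge positions, on
the low side in one coordinate, so that an edge can be separated from it from either side. -/
def sentinel (m r : ℕ) (ζ : Bool) : ℝ :=
  if r = 0 ∧ ζ = false then -(2 * 2 ^ m + 2) else 2 * 2 ^ m + 2

noncomputable def coverPos (φ : E → ℕ) (τ : E → ℝ) (m r : ℕ) (ζ : Bool) (o : Option E) : ℝ :=
  o.elim (sentinel m r ζ) (edgePos φ τ m r ζ)

variable {φ : E → ℕ} {τ : E → ℝ} {m r : ℕ} {ζ : Bool} {e f : E}

theorem edgePos_lt_edgePos_of_xor_lt (hτ01 : ∀ e, 0 < τ e ∧ τ e < 1)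
    (h : φ e ^^^ Nat.bitMask m r < φ f ^^^ Nat.bitMask m r) :
    edgePos φ τ m r ζ e < edgePos φ τ m r ζ f := by
  have hcast : ((φ e ^^^ Nat.bitMask m r : ℕ) : ℝ) + 1 ≤ (φ f ^^^ Nat.bitMask m r : ℕ) := by
    exact_mod_cast h
  have he := hτ01 e
  have hf := hτ01 f
  unfold edgePos
  split_ifs <;> linarith

theorem edgePos_true_lt_iff (h : φ e = φ f) :
    edgePos φ τ m r true e < edgePos φ τ m r true f ↔ τ e < τ f := by
  simp [edgePos, h]

theorem edgePos_false_lt_iff (h : φ e = φ f) :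
    edgePos φ τ m r false e < edgePos φ τ m r false f ↔ τ f < τ e := by
  simp only [edgePos, h, Bool.false_eq_true, if_false, add_lt_add_iff_left, neg_lt_neg_iff]

theorem abs_edgePos_lt (hτ01 : ∀ e, 0 < τ e ∧ τ e < 1) (hφ : ∀ e, φ e < 2 ^ m) :
    |edgePos φ τ m r ζ e| < 2 * 2 ^ m + 2 := by
  have hblock : ((φ e ^^^ Nat.bitMask m r : ℕ) : ℝ) < 2 ^ m := by
    exact_mod_cast Nat.xor_lt_two_pow (hφ e) (Nat.bitMask_lt m r)
  have hτe := hτ01 e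
  rw [abs_lt]
  unfold edgePos
  have hnonneg : (0 : ℝ) ≤ (φ e ^^^ Nat.bitMask m r : ℕ) := Nat.cast_nonneg _
  constructor <;> split_ifs <;> linarith

theorem exists_edgePos_notMem_uIcc_sentinel (hm : 2 ≤ m) (hτ : Function.Injective τ)
    (hτ01 : ∀ e, 0 < τ e ∧ τ e < 1) (hφ : ∀ e, φ e < 2 ^ m) (hne : e ≠ f) :
    ∃ r < Nat.clog 2 m + 1, ∃ ζ,
      edgePos φ τ m r ζ e ∉ Set.uIcc (edgePos φ τ m r ζ f) (sentinel m r ζ) := by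
  have hbound (r : ℕ) (ζ : Bool) := abs_lt.mp (abs_edgePos_lt (r := r) (ζ := ζ) (e := e) hτ01 hφ)
  by_cases hφe : φ e = φ f
  · rcases (hτ.ne hne).lt_or_gt with h | h
    · exact ⟨0, by omega, true, Set.notMem_uIcc_of_lt ((edgePos_true_lt_iff hφe).mpr h)
        (by simpa [sentinel] using (hbound 0 true).2)⟩
    -- the sentinel of `(0, false)` lies below, so use `(1, false)`
    · have h1 : 1 < Nat.clog 2 m + 1 := by have := Nat.clog_pos one_lt_two hm; omega
      exact ⟨1, h1, false, Set.notMem_uIcc_of_lt ((edgePos_false_lt_iff hφe).mpr h)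
        (by simpa [sentinel] using (hbound 1 false).2)⟩
  · have hblock : φ e ^^^ Nat.bitMask m 0 ≠ φ f ^^^ Nat.bitMask m 0 := fun h =>
      hφe (Nat.xor_left_injective h)
    rcases hblock.lt_or_gt with h | h
    · exact ⟨0, by omega, true, Set.notMem_uIcc_of_lt (edgePos_lt_edgePos_of_xor_lt hτ01 h)
        (by simpa [sentinel] using (hbound 0 true).2)⟩
    · exact ⟨0, by omega, false, Set.notMem_uIcc_of_gt (edgePos_lt_edgePos_of_xor_lt hτ01 h)
        (by simpa [sentinel] using (hbound 0 false).1)⟩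

theorem exists_edgePos_notMem_uIcc_of_eq {e₁ e₂ : E} (hτ : Function.Injective τ)
    (hτ01 : ∀ e, 0 < τ e ∧ τ e < 1) (h₁ : φ e = φ e₁) (h₂ : φ e ≠ φ e₂) (hne : e ≠ e₁) :
    ∃ ζ, edgePos φ τ m r ζ e ∉ Set.uIcc (edgePos φ τ m r ζ e₁) (edgePos φ τ m r ζ e₂) := by
  have hblock : φ e ^^^ Nat.bitMask m r ≠ φ e₂ ^^^ Nat.bitMask m r := fun h =>
    h₂ (Nat.xor_left_injective h)
  rcases hblock.lt_or_gt with hb | hb <;> rcases (hτ.ne hne).lt_or_gt with ht | ht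
  · exact ⟨true, Set.notMem_uIcc_of_lt ((edgePos_true_lt_iff h₁).mpr ht)
      (edgePos_lt_edgePos_of_xor_lt hτ01 hb)⟩
  · exact ⟨false, Set.notMem_uIcc_of_lt ((edgePos_false_lt_iff h₁).mpr ht)
      (edgePos_lt_edgePos_of_xor_lt hτ01 hb)⟩
  · exact ⟨false, Set.notMem_uIcc_of_gt ((edgePos_false_lt_iff h₁.symm).mpr ht)
      (edgePos_lt_edgePos_of_xor_lt hτ01 hb)⟩
  · exact ⟨true, Set.notMem_uIcc_of_gt ((edgePos_true_lt_iff h₁.symm).mpr ht)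
      (edgePos_lt_edgePos_of_xor_lt hτ01 hb)⟩

theorem exists_edgePos_notMem_uIcc {e₁ e₂ : E} (hτ : Function.Injective τ)
    (hτ01 : ∀ e, 0 < τ e ∧ τ e < 1) (hφ : ∀ e, φ e < 2 ^ m) (h₁ : e ≠ e₁) (h₂ : e ≠ e₂)
    (h₁₂ : φ e₁ ≠ φ e₂) :
    ∃ r < Nat.clog 2 m + 1, ∃ ζ,
      edgePos φ τ m r ζ e ∉ Set.uIcc (edgePos φ τ m r ζ e₁) (edgePos φ τ m r ζ e₂) := by
  by_cases hφ₁ : φ e = φ e₁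
  · obtain ⟨ζ, h⟩ := exists_edgePos_notMem_uIcc_of_eq (r := 0) hτ hτ01 hφ₁ (hφ₁ ▸ h₁₂) h₁
    exact ⟨0, by omega, ζ, h⟩
  by_cases hφ₂ : φ e = φ e₂
  · obtain ⟨ζ, h⟩ := exists_edgePos_notMem_uIcc_of_eq (r := 0) hτ hτ01 hφ₂ (hφ₂ ▸ h₁₂.symm) h₂
    exact ⟨0, by omega, ζ, by rwa [Set.uIcc_comm]⟩
  obtain ⟨r, hr, h | h⟩ := Nat.exists_xor_bitMask_extreme (hφ e) (hφ e₁) (hφ e₂) hφ₁ hφ₂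
  · exact ⟨r, hr, true, Set.notMem_uIcc_of_lt (edgePos_lt_edgePos_of_xor_lt hτ01 h.1)
      (edgePos_lt_edgePos_of_xor_lt hτ01 h.2)⟩
  · exact ⟨r, hr, true, Set.notMem_uIcc_of_gt (edgePos_lt_edgePos_of_xor_lt hτ01 h.1)
      (edgePos_lt_edgePos_of_xor_lt hτ01 h.2)⟩

/-- `a` and `b` will be the edges of one colour class covering the endpoints of an edge `f`. -/
theorem exists_edgePos_notMem_uIcc_coverPos (hm : 2 ≤ m) (hτ : Function.Injective τ)
    (hτ01 : ∀ e, 0 < τ e ∧ τ e < 1) (hφ : ∀ e, φ e < 2 ^ m) {a b : Option E}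
    (ha : a ≠ some e) (hb : b ≠ some e)
    (hab : ∀ e₁ e₂, a = some e₁ → b = some e₂ → e₁ ≠ e₂ → φ e₁ ≠ φ e₂) :
    ∃ r < Nat.clog 2 m + 1, ∃ ζ,
      edgePos φ τ m r ζ e ∉ Set.uIcc (coverPos φ τ m r ζ a) (coverPos φ τ m r ζ b) := by
  rcases a with _ | e₁ <;> rcases b with _ | e₂ <;> simp only [coverPos, Option.elim]
  · have h : edgePos φ τ m 0 true e < sentinel m 0 true := by
      simpa [sentinel] using (abs_lt.mp (abs_edgePos_lt hτ01 hφ)).2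
    exact ⟨0, by omega, true, Set.notMem_uIcc_of_lt h h⟩
  · obtain ⟨r, hr, ζ, h⟩ :=
      exists_edgePos_notMem_uIcc_sentinel hm hτ hτ01 hφ (ne_of_apply_ne some hb).symm
    exact ⟨r, hr, ζ, by rwa [Set.uIcc_comm]⟩
  · exact exists_edgePos_notMem_uIcc_sentinel hm hτ hτ01 hφ (ne_of_apply_ne some ha).symm
  · by_cases h₁₂ : e₁ = e₂
    · subst h₁₂
      obtain ⟨r, hr, ζ, h⟩ :=
        exists_edgePos_notMem_uIcc_sentinel hm hτ hτ01 hφ (ne_of_apply_ne some ha).symm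
      refine ⟨r, hr, ζ, fun hmem => h ?_⟩
      rw [Set.uIcc_self, Set.mem_singleton_iff] at hmem
      exact hmem ▸ Set.left_mem_uIcc
    · exact exists_edgePos_notMem_uIcc hτ hτ01 hφ (ne_of_apply_ne some ha).symm
        (ne_of_apply_ne some hb).symm (hab e₁ e₂ rfl rfl h₁₂)

end Positions

theorem exists_injective_pos_lt_one (α : Type*) [Countable α] :
    ∃ τ : α → ℝ, Function.Injective τ ∧ ∀ a, 0 < τ a ∧ τ a < 1 := by
  obtain ⟨f, hf⟩ := exists_injective_nat α
  refine ⟨fun a => ((f a : ℝ) + 2)⁻¹, fun a b h => hf ?_, fun a => ⟨by positivity, ?_⟩⟩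
  · exact_mod_cast add_right_cancel (inv_injective h)
  · exact inv_lt_one_of_one_lt₀ (by linarith [(Nat.cast_nonneg (f a) : (0 : ℝ) ≤ f a)])

section Construction

variable {V E C : Type*} {ends : E → Sym2 V}

open Classical in
noncomputable def coverEdge (ends : E → Sym2 V) (c : E → C) (i : C) (w : V) : Option E :=
  if h : ∃ e, c e = i ∧ w ∈ ends e then some h.choose else none

theorem coverEdge_color_eq_some (c : (lineGraph ends).Coloring C) {e : E} {w : V}
    (hw : w ∈ ends e) : coverEdge ends c (c e) w = some e := by
  have h : ∃ e', c e' = c e ∧ w ∈ ends e' := ⟨e, rfl, hw⟩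
  rw [coverEdge, dif_pos h]
  exact congrArg some (lineGraph.eq_of_color_eq_of_mem c h.choose_spec.1 h.choose_spec.2 hw)

theorem color_eq_and_mem_of_coverEdge_eq_some {c : E → C} {i : C} {w : V} {e : E}
    (h : coverEdge ends c i w = some e) : c e = i ∧ w ∈ ends e := by
  unfold coverEdge at h
  split_ifs at h with hex
  exact Option.some_injective _ h ▸ hex.choose_spec

theorem sameColorDistTwo_adj_of_coverEdge_eq_some (c : (lineGraph ends).Coloring C) {i : C}
    {f e₁ e₂ : E} {y₁ y₂ : V} (hf : ends f = s(y₁, y₂)) (h₁ : coverEdge ends c i y₁ = some e₁)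
    (h₂ : coverEdge ends c i y₂ = some e₂) (h₁₂ : e₁ ≠ e₂) :
    ((lineGraph ends).sameColorDistTwo c).Adj e₁ e₂ := by
  obtain ⟨hc₁, hy₁⟩ := color_eq_and_mem_of_coverEdge_eq_some h₁
  obtain ⟨hc₂, hy₂⟩ := color_eq_and_mem_of_coverEdge_eq_some h₂
  have hc : c e₁ = c e₂ := hc₁.trans hc₂.symm
  have hf₁ : y₁ ∈ ends f := hf ▸ Sym2.mem_mk_left y₁ y₂
  have hf₂ : y₂ ∈ ends f := hf ▸ Sym2.mem_mk_right y₁ y₂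
  refine ⟨h₁₂, hc, f, lineGraph_adj.mpr ⟨?_, y₁, hf₁, hy₁⟩, lineGraph_adj.mpr ⟨?_, y₂, hf₂, hy₂⟩⟩
  · rintro rfl
    exact h₁₂ (lineGraph.eq_of_color_eq_of_mem c hc hf₂ hy₂)
  · rintro rfl
    exact h₁₂ (lineGraph.eq_of_color_eq_of_mem c hc hy₁ hf₁)

theorem lineGraph_hasBoxRep_of_colorings [Countable E] [Fintype C] {m : ℕ} (hm : 2 ≤ m)
    (c : (lineGraph ends).Coloring C) (φ : E → ℕ) (hφ : ∀ e, φ e < 2 ^ m)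
    (hφc : ∀ e₁ e₂, ((lineGraph ends).sameColorDistTwo c).Adj e₁ e₂ → φ e₁ ≠ φ e₂) :
    (lineGraph ends).HasBoxRep (Fintype.card C * ((Nat.clog 2 m + 1) * 2)) := by
  obtain ⟨τ, hτ, hτ01⟩ := exists_injective_pos_lt_one E
  rw [show Fintype.card C * ((Nat.clog 2 m + 1) * 2) =
    Fintype.card (C × Fin (Nat.clog 2 m + 1) × Bool) by simp]
  refine lineGraph_hasBoxRep (fun d w => coverPos φ τ m d.2.1 d.2.2 (coverEdge ends c d.1 w))
    fun e f hne hadj => ?_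
  obtain ⟨y₁, y₂, hf⟩ : ∃ y₁ y₂, ends f = s(y₁, y₂) := Sym2.ind (fun x y => ⟨x, y, rfl⟩) (ends f)
  have hcover : ∀ y ∈ ends f, coverEdge ends c (c e) y ≠ some e := fun y hy h =>
    hadj (lineGraph_adj.mpr ⟨hne, y, (color_eq_and_mem_of_coverEdge_eq_some h).2, hy⟩)
  obtain ⟨r, hr, ζ, h⟩ := exists_edgePos_notMem_uIcc_coverPos hm hτ hτ01 hφ
    (hcover y₁ (hf ▸ Sym2.mem_mk_left y₁ y₂)) (hcover y₂ (hf ▸ Sym2.mem_mk_right y₁ y₂))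
    fun e₁ e₂ h₁ h₂ h₁₂ => hφc e₁ e₂ (sameColorDistTwo_adj_of_coverEdge_eq_some c hf h₁ h₂ h₁₂)
  refine ⟨(c e, ⟨r, hr⟩, ζ), ?_⟩
  simp only [hf, Sym2.forall_mem_pair]
  rw [Set.uIcc, Set.mem_Icc, not_and_or, not_le, not_le, lt_inf_iff, sup_lt_iff] at h
  rcases h with h | h
  · exact Or.inl fun x hx => by simpa [coverPos, coverEdge_color_eq_some c hx] using h
  · exact Or.inr fun x hx => by simpa [coverPos, coverEdge_color_eq_some c hx] using h

end Construction

namespace Nat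

theorem clog_two_lt_self {n : ℕ} (hn : 1 ≤ n) : clog 2 n < n := by
  have : clog 2 n ≤ n - 1 := (clog_le_iff_le_pow one_lt_two).mpr (by
    have := Nat.lt_two_pow_self (n := n - 1); omega)
  omega

theorem clog_two_succ_le {n : ℕ} (hn : 1 ≤ n) : clog 2 (n + 1) ≤ clog 2 n + 1 :=
  (clog_le_iff_le_pow one_lt_two).mpr (by
    have := le_pow_clog one_lt_two n; rw [pow_succ]; omega)

theorem succ_mul_clog_clog_succ_le {Δ : ℕ} (hΔ : 2 ≤ Δ) :
    (Δ + 1) * ((clog 2 (clog 2 (Δ + 1)) + 1) * 2) ≤ 2 * Δ * (clog 2 (clog 2 Δ) + 3) + 1 := by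
  have hlog : 1 ≤ clog 2 Δ := clog_pos one_lt_two hΔ
  have hsucc : clog 2 (clog 2 (Δ + 1)) ≤ clog 2 (clog 2 Δ) + 1 :=
    (clog_mono_right 2 (clog_two_succ_le (by omega))).trans (clog_two_succ_le hlog)
  have hsmall : clog 2 (clog 2 Δ) + 2 ≤ Δ := by
    have := clog_two_lt_self hlog; have := clog_two_lt_self (n := Δ) (by omega); omega
  nlinarith

end Nat

theorem boxicity_lineGraph_general {V E : Type*} [Fintype E]
    (ends : E → Sym2 V)
    (Δ : ℕ) (hΔ : Δ = @SimpleGraph.maxDegree E (lineGraph ends) _ (Classical.decRel _))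
    (h2 : 2 ≤ Δ) :
    (lineGraph ends).boxicity ≤ 2 * Δ * (Nat.clog 2 (Nat.clog 2 Δ) + 3) + 1 := by
  classical
  have hdeg (e : E) : (lineGraph ends).degree e ≤ Δ := by
    rw [hΔ]
    exact (lineGraph ends).degree_le_maxDegree e
  obtain ⟨c⟩ := SimpleGraph.colorable_succ_of_forall_degree_le hdeg
  obtain ⟨φ⟩ := SimpleGraph.colorable_succ_of_forall_degree_le fun e =>
    (lineGraph.degree_sameColorDistTwo_le c e).trans (hdeg e)
  have hm : 2 ≤ Nat.clog 2 (Δ + 1) := (Nat.lt_clog_iff_pow_lt one_lt_two).mpr (by omega)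
  have hbox := lineGraph_hasBoxRep_of_colorings hm c (fun e => φ e)
    (fun e => (φ e).isLt.trans_le (Nat.le_pow_clog one_lt_two _))
    fun _ _ h => Fin.val_injective.ne (φ.valid h)
  rw [Fintype.card_fin] at hbox
  exact SimpleGraph.boxicity_le_of_hasBoxRep (hbox.mono (Nat.succ_mul_clog_clog_succ_le h2))

/-- If `G` is the line graph of a multigraph and has maximum degree `Δ ≥ 2`, then
`box(G) ≤ 2Δ(⌈log₂ log₂ Δ⌉ + 3) + 1`. -/
theorem boxicity_lineGraph {V E : Type*} [Fintype V] [Fintype E]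
    (ends : E → Sym2 V) (hloop : ∀ e, ¬ (ends e).IsDiag)
    (Δ : ℕ) (hΔ : Δ = @SimpleGraph.maxDegree E (lineGraph ends) _ (Classical.decRel _))
    (h2 : 2 ≤ Δ) :
    (lineGraph ends).boxicity ≤ 2 * Δ * (Nat.clog 2 (Nat.clog 2 Δ) + 3) + 1 :=
  boxicity_lineGraph_general ends Δ hΔ h2
end

section
/- For the d-dimensional hypercube graph H_d with d ≥ 2, box(H_d) ≥ (⌈log₂ log₂ d⌉ + 1)/2. -/
/-- The `d`-dimensional hypercube graph: vertices are bit strings of length `d`,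
adjacent iff they differ in exactly one position. -/
def hypercubeGraph (d : ℕ) : SimpleGraph (Fin d → Bool) :=
  SimpleGraph.fromRel (fun x y => hammingDist x y = 1)

open Finset

namespace Finset
variable {P : Type*} [PartialOrder P]

theorem exists_isChain_or_isAntichain_of_mul_lt_card (s : Finset P) (m n : ℕ)
    (h : m * n < #s) :
    ∃ t ⊆ s, (IsChain (· ≤ ·) (t : Set P) ∧ m < #t) ∨
      (IsAntichain (· ≤ ·) (t : Set P) ∧ n < #t) := by
  classical
  induction m generalizing s with
  | zero =>
    obtain ⟨x, hx⟩ := card_pos.1 (by omega : 0 < #s)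
    exact ⟨{x}, by simpa using hx, .inl ⟨by simp [IsChain], by simp⟩⟩
  | succ m ih =>
    -- the maximal elements form an antichain; if it is small, a long chain lives below it
    set A := s.filter (Maximal (· ∈ s))
    have hAs : A ⊆ s := filter_subset _ _
    by_cases hAn : n < #A
    · refine ⟨A, hAs, .inr ⟨fun x hx y hy hxy hle => hxy ?_, hAn⟩⟩
      exact (mem_filter.1 hx).2.eq_of_le (mem_filter.1 hy).1 hle
    obtain ⟨t, hts, ht | ht⟩ :=
      ih (s \ A) (by rw [card_sdiff_of_subset hAs]; rw [Nat.succ_mul] at h; omega)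
    · obtain ⟨hchain, hcard⟩ := ht
      obtain ⟨x, hxt⟩ := t.exists_maximal (card_pos.1 (by omega))
      have htop : ∀ z ∈ t, z ≤ x := fun z hz =>
        (hchain.total hz hxt.1).elim id fun hxz => hxt.2 hz hxz
      obtain ⟨y, hxy, hy⟩ := s.exists_le_maximal (sdiff_subset (hts hxt.1))
      have hyt : y ∉ t := fun hyt => (mem_sdiff.1 (hts hyt)).2 (mem_filter.2 ⟨hy.1, hy⟩)
      refine ⟨insert y t, insert_subset hy.1 (hts.trans sdiff_subset), .inl ⟨?_, ?_⟩⟩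
      · rw [coe_insert]
        exact hchain.insert fun z hz _ => .inr ((htop z hz).trans hxy)
      · rw [card_insert_of_notMem hyt]; omega
    · exact ⟨t, hts.trans sdiff_subset, .inr ht⟩

variable {α β : Type*} [LinearOrder α] [LinearOrder β]

theorem exists_monotoneOn_or_antitoneOn_of_mul_lt_card (g : α → β) (X : Finset α)
    (m n : ℕ) (h : m * n < #X) :
    ∃ Y ⊆ X, (MonotoneOn g Y ∧ m < #Y) ∨ (AntitoneOn g Y ∧ n < #Y) := by
  classical
  have hinj : Function.Injective fun x => (x, g x) := fun x y hxy => congrArg Prod.fst hxy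
  obtain ⟨t, hts, ht⟩ := (X.image fun x => (x, g x)).exists_isChain_or_isAntichain_of_mul_lt_card
    m n (by rwa [card_image_of_injective _ hinj])
  obtain ⟨Y, hYX, rfl⟩ := subset_image_iff.1 hts
  rw [card_image_of_injective _ hinj, coe_image] at ht
  refine ⟨Y, hYX, ht.imp (fun ⟨hc, hcard⟩ => ⟨?_, hcard⟩) fun ⟨hanti, hcard⟩ => ⟨?_, hcard⟩⟩
  · intro a ha b hb hab
    rcases eq_or_ne a b with rfl | hne
    · rfl
    rcases hc (Set.mem_image_of_mem _ ha) (Set.mem_image_of_mem _ hb) (hinj.ne hne) with h | h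
    · exact h.2
    · exact absurd (le_antisymm hab h.1) hne
  · intro a ha b hb hab
    rcases eq_or_ne a b with rfl | hne
    · rfl
    by_contra hlt
    exact hanti (Set.mem_image_of_mem _ ha) (Set.mem_image_of_mem _ hb) (hinj.ne hne)
      ⟨hab, (not_le.1 hlt).le⟩

theorem exists_lt_lt_of_two_lt_card {X : Finset α} (h : 2 < #X) :
    ∃ a ∈ X, ∃ b ∈ X, ∃ c ∈ X, a < b ∧ b < c := by
  let e := X.orderEmbOfFin rfl
  exact ⟨e ⟨0, by omega⟩, X.orderEmbOfFin_mem rfl _, e ⟨1, h.trans' one_lt_two⟩,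
    X.orderEmbOfFin_mem rfl _, e ⟨2, h⟩, X.orderEmbOfFin_mem rfl _,
    e.strictMono (by simp [Fin.lt_def]), e.strictMono (by simp [Fin.lt_def])⟩

theorem card_le_two_pow_two_pow_of_middle_top {ι : Type*} (g : ι → α → β) (S : Finset ι)
    (X : Finset α)
    (H : ∀ a ∈ X, ∀ b ∈ X, ∀ c ∈ X, a < b → b < c → ∃ s ∈ S, g s a < g s b ∧ g s c < g s b) :
    #X ≤ 2 ^ 2 ^ #S := by
  classical
  induction S using Finset.induction_on generalizing X with
  | empty =>
    by_contra! hX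
    obtain ⟨a, ha, b, hb, c, hc, hab, hbc⟩ := exists_lt_lt_of_two_lt_card (by simpa using hX)
    simpa using H a ha b hb c hc hab hbc
  | insert s₀ S hs₀ ih =>
    by_contra! hX
    have hsq : 2 ^ 2 ^ #S * 2 ^ 2 ^ #S < #X := by
      rwa [← pow_add, ← two_mul, ← pow_succ', ← card_insert_of_notMem hs₀]
    obtain ⟨Y, hYX, hY⟩ := X.exists_monotoneOn_or_antitoneOn_of_mul_lt_card (g s₀) _ _ hsq
    suffices #Y ≤ 2 ^ 2 ^ #S by omega
    refine ih Y fun a ha b hb c hc hab hbc => ?_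
    obtain ⟨s, hs, hsa, hsc⟩ := H a (hYX ha) b (hYX hb) c (hYX hc) hab hbc
    refine ⟨s, (mem_insert.1 hs).resolve_left ?_, hsa, hsc⟩
    rintro rfl
    rcases hY with ⟨hmono, -⟩ | ⟨hanti, -⟩
    · exact (hmono hb hc hbc.le).not_gt hsc
    · exact (hanti ha hb hab.le).not_gt hsa

end Finset

section ThreeSuitable
variable {ι V β : Type*} [LinearOrder β]

/-- 3-suitability in Dushnik's sense; the rankings `g s` may have ties. -/
def IsThreeSuitable (g : ι → V → β) (X : Finset V) : Prop :=
  ∀ i ∈ X, ∀ j ∈ X, ∀ m ∈ X, i ≠ j → m ≠ i → m ≠ j → ∃ s, g s i < g s m ∧ g s j < g s m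

theorem IsThreeSuitable.card_le [Fintype ι] [Nonempty ι] [LinearOrder V] {g : ι → V → β}
    {X : Finset V} (H : IsThreeSuitable g X) : #X ≤ 2 ^ 2 ^ (Fintype.card ι - 1) := by
  classical
  obtain ⟨s₀⟩ := ‹Nonempty ι›
  let π : V ↪ β ×ₗ V := ⟨fun x => toLex (g s₀ x, x), fun x y h => congrArg (·.2) h⟩
  have key := card_le_two_pow_two_pow_of_middle_top (fun s p => g s (ofLex p).2)
    (univ.erase s₀) (X.map π) ?_
  · rwa [card_map, card_erase_of_mem (mem_univ _), card_univ] at key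
  simp only [mem_map, forall_exists_index, and_imp]
  rintro _ a ha rfl _ b hb rfl _ c hc rfl hab hbc
  obtain ⟨s, hsa, hsc⟩ := H a ha c hc b hb (fun h => (h ▸ hab.trans hbc).false)
    (fun h => (h ▸ hab).false) (fun h => (h ▸ hbc).false)
  refine ⟨s, mem_erase.2 ⟨?_, mem_univ _⟩, hsa, hsc⟩
  rintro rfl
  exact (Prod.Lex.toLex_lt_toLex'.1 hbc).1.not_gt hsc

end ThreeSuitable

namespace SimpleGraph
variable {V : Type*} {G : SimpleGraph V} {k : ℕ}

theorem hasBoxRep_card_s19 [Fintype V] (G : SimpleGraph V) : G.HasBoxRep (Fintype.card V) := by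
  classical
  let e := (Fintype.equivFin V).symm
  -- coordinate `i` separates `e i` (the point `0`) from its non-neighbours (the point `1`)
  refine ⟨fun v i => if v = e i ∨ G.Adj v (e i) then 0 else 1,
    fun v i => if v = e i then 0 else 1, fun v i => ?_,
    fun u v huv => ⟨fun hadj i => ?_, fun h => ?_⟩⟩
  · dsimp only
    split_ifs <;> simp_all
  · dsimp only
    split_ifs <;> simp_all [G.adj_comm]
  · by_contra hn
    have := h (e.symm u)
    norm_num [G.adj_comm, eq_comm, hn, huv] at this

theorem hasBoxRep_boxicity [Fintype V] (G : SimpleGraph V) : G.HasBoxRep G.boxicity :=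
  Nat.sInf_mem (s := {k | G.HasBoxRep k}) ⟨_, G.hasBoxRep_card_s19⟩

theorem HasBoxRep.pos_of_not_adj (h : G.HasBoxRep k) {u v : V} (huv : u ≠ v)
    (hn : ¬ G.Adj u v) : 0 < k := by
  obtain ⟨l, r, -, hrep⟩ := h
  by_contra! hk
  obtain rfl : k = 0 := by omega
  exact hn ((hrep u v huv).2 finZeroElim)

theorem HasBoxRep.exists_rankings (h : G.HasBoxRep k) :
    ∃ g : Fin k ⊕ Fin k → V → ℝ, ∀ ⦃u v w m : V⦄, G.Adj u w → G.Adj v w → ¬ G.Adj m w →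
      m ≠ w → ∃ s, g s u < g s m ∧ g s v < g s m := by
  obtain ⟨l, r, hlr, hrep⟩ := h
  refine ⟨Sum.elim (fun s x => l x s) (fun s x => -r x s), fun u v w m hu hv hm hmw => ?_⟩
  have hu := (hrep u w hu.ne).1 hu
  have hv := (hrep v w hv.ne).1 hv
  obtain ⟨s, hs⟩ : ∃ s, ¬ max (l m s) (l w s) ≤ min (r m s) (r w s) := by
    by_contra! hall
    exact hm ((hrep m w hmw).2 hall)
  simp only [max_le_iff, le_min_iff] at hu hv hs
  simp only [Sum.exists, Sum.elim_inl, Sum.elim_inr, neg_lt_neg_iff]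
  have hlrm := hlr m s
  have hlrw := hlr w s
  -- the box of `w` lies either left of the box of `m` in coordinate `s`, or right of it
  by_cases hwm : r w s < l m s
  · refine .inl ⟨s, ?_, ?_⟩ <;> grind
  · refine .inr ⟨s, ?_, ?_⟩ <;> grind

end SimpleGraph

namespace hypercubeGraph
variable {d : ℕ}

def single (i : Fin d) : Fin d → Bool := fun p => decide (p = i)

def pair (i j : Fin d) : Fin d → Bool := fun p => decide (p = i ∨ p = j)

theorem adj_iff {x y : Fin d → Bool} : (hypercubeGraph d).Adj x y ↔ hammingDist x y = 1 := by
  refine ⟨fun h => ?_, fun h => ⟨hammingDist_pos.1 (by omega), .inl h⟩⟩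
  exact (SimpleGraph.fromRel_adj _ _ _).1 h |>.2.elim id fun h' => by rwa [hammingDist_comm]

theorem pair_comm (i j : Fin d) : pair i j = pair j i := by
  funext p
  simp only [pair, or_comm]

theorem single_ne_single {i j : Fin d} (h : i ≠ j) : single i ≠ single j :=
  fun hij => by simpa [single, h] using congrFun hij i

theorem single_ne_pair {i j m : Fin d} (hmi : m ≠ i) : single m ≠ pair i j :=
  fun h => by simpa [single, pair, hmi.symm] using congrFun h i

theorem not_adj_single_single {i j : Fin d} (h : i ≠ j) :
    ¬ (hypercubeGraph d).Adj (single i) (single j) := by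
  rw [adj_iff, hammingDist, card_eq_one]
  rintro ⟨p, hp⟩
  have hi : i ∈ ({p} : Finset (Fin d)) := hp ▸ by simp [single, h]
  have hj : j ∈ ({p} : Finset (Fin d)) := hp ▸ by simp [single, h.symm]
  simp_all

theorem adj_single_pair {i j : Fin d} (h : i ≠ j) :
    (hypercubeGraph d).Adj (single i) (pair i j) := by
  rw [adj_iff, hammingDist, card_eq_one]
  refine ⟨j, ?_⟩
  ext p
  by_cases p = i <;> by_cases p = j <;> simp_all [single, pair]

theorem not_adj_single_pair {i j m : Fin d} (hmi : m ≠ i) (hmj : m ≠ j) :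
    ¬ (hypercubeGraph d).Adj (single m) (pair i j) := by
  rw [adj_iff, hammingDist, card_eq_one]
  rintro ⟨p, hp⟩
  have hm : m ∈ ({p} : Finset (Fin d)) := hp ▸ by simp [single, pair, hmi, hmj]
  have hi : i ∈ ({p} : Finset (Fin d)) := hp ▸ by simp [single, pair, hmi.symm]
  simp_all

theorem exists_isThreeSuitable_of_hasBoxRep {k : ℕ} (h : (hypercubeGraph d).HasBoxRep k) :
    ∃ g : Fin k ⊕ Fin k → Fin d → ℝ, IsThreeSuitable g univ := by
  obtain ⟨g, hg⟩ := h.exists_rankings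
  exact ⟨fun s i => g s (single i), fun i _ j _ m _ hij hmi hmj =>
    hg (adj_single_pair hij) (pair_comm i j ▸ adj_single_pair hij.symm)
      (not_adj_single_pair hmi hmj) (single_ne_pair hmi)⟩

theorem le_two_pow_two_pow_of_hasBoxRep {k : ℕ} (hk : 0 < k)
    (h : (hypercubeGraph d).HasBoxRep k) : d ≤ 2 ^ 2 ^ (2 * k - 1) := by
  obtain ⟨g, hg⟩ := exists_isThreeSuitable_of_hasBoxRep h
  have : Nonempty (Fin k ⊕ Fin k) := ⟨.inl ⟨0, hk⟩⟩
  simpa [two_mul] using hg.card_le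

end hypercubeGraph

/-- For `d ≥ 2`, `box(H_d) ≥ (⌈log₂ log₂ d⌉ + 1)/2`. -/
theorem boxicity_hypercube_lower (d : ℕ) (hd : 2 ≤ d) :
    ((Nat.clog 2 (Nat.clog 2 d) + 1 : ℕ) : ℝ) / 2 ≤
      ((hypercubeGraph d).boxicity : ℝ) := by
  have hrep := (hypercubeGraph d).hasBoxRep_boxicity
  have h01 : (⟨0, by omega⟩ : Fin d) ≠ ⟨1, by omega⟩ := by simp
  have hpos := hrep.pos_of_not_adj (hypercubeGraph.single_ne_single h01)
    (hypercubeGraph.not_adj_single_single h01)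
  have hle : Nat.clog 2 (Nat.clog 2 d) ≤ 2 * (hypercubeGraph d).boxicity - 1 := by
    rw [Nat.clog_le_iff_le_pow one_lt_two, Nat.clog_le_iff_le_pow one_lt_two]
    exact hypercubeGraph.le_two_pow_two_pow_of_hasBoxRep hpos hrep
  rw [div_le_iff₀ two_pos]
  exact_mod_cast (by omega : _ ≤ (hypercubeGraph d).boxicity * 2)
end
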